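/- For any finite simple connected graph G there exists a natural number k(G) with α(Ĝ) + β*(G) ≤ k(G) ≤ n(G) such that: (a) ξ(G⊙H) = β(Ĝ)·n(H) + k(G) for every finite simple graph H with n(H) > min{ α(Ĝ), β(Ĝ) − β*(G) + 1 }, and (b) ξ(G⊙H) ≤ β(Ĝ)·n(H) + k(G) for every finite simple graph H with n(H) ≤ min{ α(Ĝ), β(Ĝ) − β*(G) + 1 }. -/

import Mathlib

universe u v

variable {V : Type u} {W : Type v}

/-- A distance-equalizer set of a graph: for every pair of distinct vertices outside `S`
there is a vertex of `S` equidistant to both. -/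
def IsDistEqSet {α : Type*} (G : SimpleGraph α) (S : Set α) : Prop :=
  ∀ ⦃x y : α⦄, x ∉ S → y ∉ S → x ≠ y → ∃ w ∈ S, G.dist w x = G.dist w y

/-- The equidistant dimension of a graph: the minimum cardinality of a distance-equalizer set. -/
noncomputable def eqdim {α : Type*} (G : SimpleGraph α) : ℕ :=
  sInf {n | ∃ S : Set α, IsDistEqSet G S ∧ S.ncard = n}

/-- The bisector of two vertices: vertices equidistant to both. -/
def bisector {α : Type*} (G : SimpleGraph α) (x y : α) : Set α :=
  {w | G.dist w x = G.dist w y}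

/-- The empty bisector graph of `G`: two distinct vertices are adjacent iff their bisector
in `G` is empty. -/
def emptyBisector {α : Type*} (G : SimpleGraph α) : SimpleGraph α where
  Adj x y := x ≠ y ∧ bisector G x y = ∅
  symm := by
    constructor
    rintro x y ⟨h1, h2⟩
    refine ⟨h1.symm, Set.eq_empty_iff_forall_notMem.mpr fun w hw => ?_⟩
    exact Set.eq_empty_iff_forall_notMem.mp h2 w
      ((show G.dist w y = G.dist w x from hw).symm)
  loopless := ⟨fun _ h => h.1 rfl⟩

/-- A vertex cover of a graph: a set of vertices meeting every edge. -/
def IsVertexCover {α : Type*} (G : SimpleGraph α) (C : Set α) : Prop :=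
  ∀ ⦃x y : α⦄, G.Adj x y → x ∈ C ∨ y ∈ C

/-- An independent set of a graph: a set of pairwise non-adjacent vertices. -/
def IsIndepSet {α : Type*} (G : SimpleGraph α) (A : Set α) : Prop :=
  ∀ ⦃x y : α⦄, x ∈ A → y ∈ A → ¬ G.Adj x y

/-- The vertex cover number `β(G)`. -/
noncomputable def vcNum {α : Type*} (G : SimpleGraph α) : ℕ :=
  sInf {n | ∃ C : Set α, IsVertexCover G C ∧ C.ncard = n}

/-- The independence number `α(G)`. -/
noncomputable def indepNum {α : Type*} (G : SimpleGraph α) : ℕ :=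
  sSup {n | ∃ A : Set α, IsIndepSet G A ∧ A.ncard = n}

/-- A forward-equalized pair `(X, Y)` of `G`: `X ∪ Y = V(G)` and for every
`a ∈ X \ Y` and `b ∈ Y \ X` there is `w` with `d(w,a) = d(w,b) + 1`. -/
def IsForwardEqualizedPair {α : Type*} (G : SimpleGraph α) (X Y : Set α) : Prop :=
  X ∪ Y = Set.univ ∧
  ∀ ⦃a⦄, a ∈ X \ Y → ∀ ⦃b⦄, b ∈ Y \ X → ∃ w, G.dist w a = G.dist w b + 1

/-- `β*(G)`: the minimum of `|X ∩ Y|` over all pairs of vertex covers `X, Y` of the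
empty bisector graph of `G` such that `(X, Y)` is a forward-equalized pair of `G`. -/
noncomputable def betaStar {α : Type*} (G : SimpleGraph α) : ℕ :=
  sInf {n | ∃ X Y : Set α,
    IsVertexCover (emptyBisector G) X ∧ IsVertexCover (emptyBisector G) Y ∧
    IsForwardEqualizedPair G X Y ∧ (X ∩ Y).ncard = n}

/-- The corona product `G ⊙ H`: one copy of `H` for each vertex `i` of `G` (the vertices
`Sum.inr (i, w)`), with `i` joined to every vertex of its copy. -/
def corona (G : SimpleGraph V) (H : SimpleGraph W) : SimpleGraph (V ⊕ V × W) where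
  Adj x y :=
    match x, y with
    | Sum.inl a, Sum.inl b => G.Adj a b
    | Sum.inl a, Sum.inr p => a = p.1
    | Sum.inr p, Sum.inl a => a = p.1
    | Sum.inr p, Sum.inr q => p.1 = q.1 ∧ H.Adj p.2 q.2
  symm := by
    constructor
    rintro (a | p) (b | q) h
    · exact h.symm
    · exact h
    · exact h
    · exact ⟨h.1.symm, h.2.symm⟩
  loopless := by
    constructor
    rintro (a | p) h
    · exact G.loopless.irrefl a h
    · exact H.loopless.irrefl p.2 h.2

/-!
In `G ⊙ H` the distance between two vertices is their distance in `G` plus one for each of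
them lying in a copy of `H`, except inside a single copy, where it is at most `2`. Hence a
distance-equalizer set `S` of `G ⊙ H` yields vertex covers `C`, `T` of `Ĝ` forming a
forward-equalized pair, with `|C|·n(H) + |T| ≤ |S|`: `C` collects the vertices whose whole copy
lies in `S`, and `T` those lying in `S` or outside `C`. Conversely `T` together with the copies
at `C` is a distance-equalizer set, so `ξ(G ⊙ H)` is the least `|C|·n(H) + |T|` over such pairs.
Minimum covers `C` give the upper bound, `k(G)` being the least matching `|T|`. A larger `C`
costs at least `n(H)` more, which outweighs any saving on `T` above the threshold, since
`|T| ≥ β(Ĝ)`, `|C| + |T| ≥ n(G) + β*(G)` and `k(G) ≤ n(G) = α(Ĝ) + β(Ĝ)`.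
-/

namespace SimpleGraph

variable {α : Type*} {G : SimpleGraph α}

theorem le_dist_of_le_succ_of_adj {t : α → ℕ} {x z : α} (hz : t z = 0)
    (ht : ∀ ⦃a b⦄, G.Adj a b → t a ≤ t b + 1) (hr : G.Reachable x z) :
    t x ≤ G.dist x z := by
  obtain ⟨p, hp⟩ := hr.exists_walk_length_eq_dist
  rw [← hp]
  clear hp hr
  induction p with
  | nil => simp [hz]
  | cons h p ih => rw [Walk.length_cons]; exact (ht h).trans (by omega)

lemma Adj.dist_le_dist_add_one {u v : α} (h : G.Adj u v) (w : α) :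
    G.dist u w ≤ G.dist v w + 1 :=
  (h.reachable.dist_triangle_left w).trans_eq (by rw [dist_eq_one_iff_adj.2 h, add_comm])

lemma Adj.dist_le_dist_add_one_right {v w : α} (h : G.Adj v w) (u : α) :
    G.dist u w ≤ G.dist u v + 1 :=
  (h.reachable.dist_triangle_right u).trans_eq (by rw [dist_eq_one_iff_adj.2 h])

end SimpleGraph

section Invariants

variable {α : Type*}

lemma eqdim_le {G : SimpleGraph α} {S : Set α} (hS : IsDistEqSet G S) : eqdim G ≤ S.ncard :=
  Nat.sInf_le ⟨S, hS, rfl⟩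

lemma exists_isDistEqSet_ncard_eq_eqdim (G : SimpleGraph α) :
    ∃ S, IsDistEqSet G S ∧ S.ncard = eqdim G :=
  Nat.sInf_mem (s := {n | ∃ S, IsDistEqSet G S ∧ S.ncard = n})
    ⟨_, Set.univ, fun x _ hx => absurd (Set.mem_univ x) hx, rfl⟩

lemma vcNum_le {G : SimpleGraph α} {C : Set α} (hC : IsVertexCover G C) : vcNum G ≤ C.ncard :=
  Nat.sInf_le ⟨C, hC, rfl⟩

lemma isVertexCover_univ (G : SimpleGraph α) : IsVertexCover G Set.univ :=
  fun x _ _ => Or.inl (Set.mem_univ x)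

lemma exists_isVertexCover_ncard_eq_vcNum (G : SimpleGraph α) :
    ∃ C, IsVertexCover G C ∧ C.ncard = vcNum G :=
  Nat.sInf_mem (s := {n | ∃ C, IsVertexCover G C ∧ C.ncard = n})
    ⟨_, Set.univ, isVertexCover_univ G, rfl⟩

lemma bddAbove_indepSet_ncard [Finite α] (G : SimpleGraph α) :
    BddAbove {n | ∃ A : Set α, IsIndepSet G A ∧ A.ncard = n} :=
  ⟨Nat.card α, fun _ ⟨B, _, hB⟩ => hB ▸ Set.ncard_le_card B⟩

lemma le_indepNum [Finite α] {G : SimpleGraph α} {A : Set α} (hA : IsIndepSet G A) :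
    A.ncard ≤ indepNum G :=
  le_csSup (bddAbove_indepSet_ncard G) ⟨A, hA, rfl⟩

/-- Gallai: complements of independent sets are exactly the vertex covers. -/
theorem indepNum_add_vcNum [Fintype α] (G : SimpleGraph α) :
    indepNum G + vcNum G = Fintype.card α := by
  have hcompl (A : Set α) : A.ncard + Aᶜ.ncard = Fintype.card α := by
    rw [Set.ncard_add_ncard_compl, Nat.card_eq_fintype_card]
  obtain ⟨C, hC, hCcard⟩ := exists_isVertexCover_ncard_eq_vcNum G
  have hle : Cᶜ.ncard ≤ indepNum G :=
    le_indepNum fun x y hx hy hxy => (hC hxy).elim hx hy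
  obtain ⟨A, hA, hAcard⟩ :
      indepNum G ∈ {n | ∃ A : Set α, IsIndepSet G A ∧ A.ncard = n} :=
    Nat.sSup_mem ⟨0, ∅, fun x _ hx => absurd hx (Set.notMem_empty x), Set.ncard_empty α⟩
      (bddAbove_indepSet_ncard G)
  have hge : vcNum G ≤ Aᶜ.ncard := vcNum_le fun x y hxy => by
    by_contra! h
    exact hA (Set.notMem_compl_iff.1 h.1) (Set.notMem_compl_iff.1 h.2) hxy
  have := hcompl A
  have := hcompl C
  omega

end Invariants

section CoverPairs

variable {α : Type*} {G : SimpleGraph α} {C T : Set α}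

variable (G C T) in
def IsEqualizingCoverPair : Prop :=
  IsVertexCover (emptyBisector G) C ∧ IsVertexCover (emptyBisector G) T ∧
    IsForwardEqualizedPair G C T

lemma exists_dist_eq_of_notMem_cover (hC : IsVertexCover (emptyBisector G) C) {i j : α}
    (hij : i ≠ j) (hi : i ∉ C) (hj : j ∉ C) : ∃ l, G.dist l i = G.dist l j := by
  by_contra! h
  exact (hC ⟨hij, Set.eq_empty_iff_forall_notMem.2 h⟩).elim hi hj

lemma IsForwardEqualizedPair.mem_or_mem (h : IsForwardEqualizedPair G C T) (a : α) :
    a ∈ C ∨ a ∈ T :=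
  Set.eq_univ_iff_forall.1 h.1 a

lemma isEqualizingCoverPair_univ (hC : IsVertexCover (emptyBisector G) C) :
    IsEqualizingCoverPair G C Set.univ :=
  ⟨hC, isVertexCover_univ _, Set.union_univ C, fun _ ha => absurd (Set.mem_univ _) ha.2⟩

lemma card_add_betaStar_le [Fintype α] (h : IsEqualizingCoverPair G C T) :
    Fintype.card α + betaStar G ≤ C.ncard + T.ncard := by
  have hβ : betaStar G ≤ (C ∩ T).ncard := Nat.sInf_le ⟨C, T, h.1, h.2.1, h.2.2, rfl⟩
  rw [← Set.ncard_union_add_ncard_inter, h.2.2.1, Set.ncard_univ, Nat.card_eq_fintype_card]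
  omega

variable (G) in
/-- The constant `k(G)` of the theorem. -/
noncomputable def minCoverPartner : ℕ :=
  sInf {t | ∃ C T, IsEqualizingCoverPair G C T ∧ C.ncard = vcNum (emptyBisector G) ∧
    T.ncard = t}

lemma minCoverPartner_le (h : IsEqualizingCoverPair G C T)
    (hC : C.ncard = vcNum (emptyBisector G)) : minCoverPartner G ≤ T.ncard :=
  Nat.sInf_le ⟨C, T, h, hC, rfl⟩

variable (G) in
lemma exists_isEqualizingCoverPair_minCoverPartner :
    ∃ C T, IsEqualizingCoverPair G C T ∧ C.ncard = vcNum (emptyBisector G) ∧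
      T.ncard = minCoverPartner G := by
  obtain ⟨C, hC, hCcard⟩ := exists_isVertexCover_ncard_eq_vcNum (emptyBisector G)
  have hne : ∃ t, ∃ C T, IsEqualizingCoverPair G C T ∧ C.ncard = vcNum (emptyBisector G) ∧
      T.ncard = t :=
    ⟨_, C, _, isEqualizingCoverPair_univ hC, hCcard, rfl⟩
  exact Nat.sInf_mem hne

variable (G) in
lemma minCoverPartner_le_card [Fintype α] : minCoverPartner G ≤ Fintype.card α := by
  obtain ⟨C, hC, hCcard⟩ := exists_isVertexCover_ncard_eq_vcNum (emptyBisector G)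
  simpa using minCoverPartner_le (isEqualizingCoverPair_univ hC) hCcard

variable (G) in
lemma indepNum_add_betaStar_le_minCoverPartner [Fintype α] :
    indepNum (emptyBisector G) + betaStar G ≤ minCoverPartner G := by
  obtain ⟨C, T, h, hC, hT⟩ := exists_isEqualizingCoverPair_minCoverPartner G
  have := card_add_betaStar_le h
  have := indepNum_add_vcNum (emptyBisector G)
  omega

theorem vcNum_mul_add_minCoverPartner_le [Fintype α] (h : IsEqualizingCoverPair G C T) {m : ℕ}
    (hm : min (indepNum (emptyBisector G)) (vcNum (emptyBisector G) - betaStar G + 1) < m) :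
    vcNum (emptyBisector G) * m + minCoverPartner G ≤ C.ncard * m + T.ncard := by
  set β := vcNum (emptyBisector G)
  have hβC : β ≤ C.ncard := vcNum_le h.1
  rcases hβC.eq_or_lt with hC | hC
  · rw [← hC]
    exact Nat.add_le_add_left (minCoverPartner_le h hC.symm) _
  -- a cover larger than `β` costs at least `m` extra, which beats `k(G) ≤ n(G)`
  have hk := minCoverPartner_le_card G
  have hαβ := indepNum_add_vcNum (emptyBisector G)
  have hβT : β ≤ T.ncard := vcNum_le h.2.1
  have hCT := card_add_betaStar_le h
  obtain ⟨m, rfl⟩ : ∃ m', m = m' + 1 := Nat.exists_eq_add_one.2 (by omega)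
  have hCm : (β + 1) * m ≤ C.ncard * m := Nat.mul_le_mul_right m hC
  rcases min_lt_iff.1 hm with hm | hm
  · nlinarith
  · have : β + 1 ≤ betaStar G + m := by omega
    nlinarith

end CoverPairs

namespace Corona

open SimpleGraph (dist_le dist_eq_one_iff_adj dist_self le_dist_of_le_succ_of_adj)

variable {G : SimpleGraph V} {H : SimpleGraph W}

def base : V ⊕ V × W → V := Sum.elim id Prod.fst

def level : V ⊕ V × W → ℕ := Sum.elim (fun _ => 0) (fun _ => 1)

def copy (j : V) : Set (V ⊕ V × W) := {z | ∃ u, z = Sum.inr (j, u)}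

@[simp] lemma base_inl (a : V) : base (Sum.inl a : V ⊕ V × W) = a := rfl
@[simp] lemma base_inr (p : V × W) : base (Sum.inr p : V ⊕ V × W) = p.1 := rfl
@[simp] lemma level_inl (a : V) : level (Sum.inl a : V ⊕ V × W) = 0 := rfl
@[simp] lemma level_inr (p : V × W) : level (Sum.inr p : V ⊕ V × W) = 1 := rfl

@[simp] lemma inl_notMem_copy (a j : V) : (Sum.inl a : V ⊕ V × W) ∉ copy j := by
  simp [copy]

@[simp] lemma inr_mem_copy_iff (p : V × W) (j : V) :
    (Sum.inr p : V ⊕ V × W) ∈ copy j ↔ p.1 = j :=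
  ⟨fun ⟨u, h⟩ => by simp_all, fun h => ⟨p.2, by rw [← h]⟩⟩

lemma adj_inl_inr (a : V) (u : W) : (corona G H).Adj (Sum.inl a) (Sum.inr (a, u)) := rfl

def inlHom (G : SimpleGraph V) (H : SimpleGraph W) : G →g corona G H := ⟨Sum.inl, id⟩

lemma reachable_inl (x : V ⊕ V × W) : (corona G H).Reachable x (Sum.inl (base x)) := by
  rcases x with a | ⟨a, u⟩
  · rfl
  · exact (adj_inl_inr a u).symm.reachable

theorem connected (hG : G.Connected) : (corona G H).Connected := by
  have : Nonempty V := hG.nonempty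
  refine ⟨fun x y => (reachable_inl x).trans ?_⟩
  exact ((hG _ _).map (inlHom G H)).trans (reachable_inl y).symm

lemma level_potential_le_succ {j : V} ⦃x y : V ⊕ V × W⦄ (h : (corona G H).Adj x y) :
    G.dist (base x) j + level x ≤ G.dist (base y) j + level y + 1 := by
  rcases x with a | ⟨a, u⟩ <;> rcases y with b | ⟨b, w⟩
  · simpa using (show G.Adj a b from h).dist_le_dist_add_one j
  · obtain rfl : a = b := h
    simp only [base_inl, base_inr, level_inl, level_inr]; omega
  · obtain rfl : b = a := h
    simp only [base_inl, base_inr, level_inl, level_inr]; omega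
  · obtain rfl : a = b := h.1
    simp only [base_inr, level_inr]; omega

open scoped Classical in
lemma copy_potential_le_succ {j : V} ⦃x y : V ⊕ V × W⦄ (h : (corona G H).Adj x y) :
    (if x ∈ copy j then 0 else G.dist (base x) j + level x + 1) ≤
      (if y ∈ copy j then 0 else G.dist (base y) j + level y + 1) + 1 := by
  by_cases hx : x ∈ copy j
  · simp [hx]
  by_cases hy : y ∈ copy j
  · -- the only neighbour of the copy of `H` at `j` outside it is `j` itself
    obtain ⟨w, rfl⟩ := hy
    rcases x with a | ⟨a, u⟩
    · obtain rfl : a = j := h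
      simp
    · exact absurd ((inr_mem_copy_iff _ _).2 h.1) hx
  · simpa [hx, hy] using level_potential_le_succ h

lemma dist_inr_inr_le_two (j : V) (u w : W) :
    (corona G H).dist (Sum.inr (j, u)) (Sum.inr (j, w)) ≤ 2 :=
  ((adj_inl_inr j u).symm.dist_le_dist_add_one _).trans_eq
    (by rw [dist_eq_one_iff_adj.2 (adj_inl_inr j w)])

section Distances

variable (hG : G.Connected)
include hG

lemma dist_inl_inl_le (a j : V) : (corona G H).dist (Sum.inl a) (Sum.inl j) ≤ G.dist a j := by
  obtain ⟨p, hp⟩ := hG.exists_walk_length_eq_dist a j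
  exact (dist_le (p.map (inlHom G H))).trans_eq (by simp [hp])

theorem dist_inl (z : V ⊕ V × W) (j : V) :
    (corona G H).dist z (Sum.inl j) = G.dist (base z) j + level z := by
  refine le_antisymm ?_ (le_dist_of_le_succ_of_adj (by simp) level_potential_le_succ
    (connected hG _ _))
  rcases z with a | ⟨a, u⟩
  · simpa using dist_inl_inl_le hG a j
  · simpa using ((adj_inl_inr a u).symm.dist_le_dist_add_one _).trans
      (Nat.add_le_add_right (dist_inl_inl_le hG a j) 1)

open scoped Classical in
theorem dist_inr_of_notMem_copy {z : V ⊕ V × W} {j : V} (hz : z ∉ copy j) (w : W) :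
    (corona G H).dist z (Sum.inr (j, w)) = G.dist (base z) j + level z + 1 := by
  refine le_antisymm ?_ ?_
  · simpa [dist_inl hG] using (adj_inl_inr (G := G) (H := H) j w).dist_le_dist_add_one_right z
  · simpa [hz] using le_dist_of_le_succ_of_adj (by simp) (copy_potential_le_succ (j := j))
      (connected hG z (Sum.inr (j, w)))

theorem dist_eq_of_forall_mem_copy {z x : V ⊕ V × W} (h : ∀ i, z ∈ copy i → x ∉ copy i) :
    (corona G H).dist z x = G.dist (base z) (base x) + level z + level x := by
  rcases x with j | ⟨j, w⟩
  · simp [dist_inl hG]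
  · rw [dist_inr_of_notMem_copy hG (fun hz => h j hz ⟨w, rfl⟩)]
    simp

end Distances

def pairSet (C T : Set V) : Set (V ⊕ V × W) := Sum.inl '' T ∪ Sum.inr '' (C ×ˢ Set.univ)

@[simp] lemma inl_mem_pairSet {C T : Set V} {i : V} :
    (Sum.inl i : V ⊕ V × W) ∈ pairSet C T ↔ i ∈ T := by
  simp [pairSet]

@[simp] lemma inr_mem_pairSet {C T : Set V} {p : V × W} :
    (Sum.inr p : V ⊕ V × W) ∈ pairSet C T ↔ p.1 ∈ C := by
  simp [pairSet]

lemma ncard_pairSet [Finite V] [Fintype W] (C T : Set V) :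
    (pairSet (W := W) C T).ncard = C.ncard * Fintype.card W + T.ncard := by
  have hdisj : Disjoint (Sum.inl '' T) (Sum.inr '' (C ×ˢ (Set.univ : Set W))) := by
    simp [Set.disjoint_left]
  rw [pairSet, Set.ncard_union_eq hdisj, Set.ncard_image_of_injective _ Sum.inl_injective,
    Set.ncard_image_of_injective _ Sum.inr_injective, Set.ncard_prod, Set.ncard_univ,
    Nat.card_eq_fintype_card, add_comm]

lemma exists_dist_add_level_eq {C T : Set V} (h : IsEqualizingCoverPair G C T)
    {x y : V ⊕ V × W} (hx : x ∉ pairSet C T) (hy : y ∉ pairSet C T) (hxy : x ≠ y) :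
    ∃ l, G.dist l (base x) + level x = G.dist l (base y) + level y := by
  obtain ⟨hC, hT, hCT⟩ := h
  have hmem := hCT.mem_or_mem
  have hF := hCT.2
  rcases x with i | ⟨i, u⟩ <;> rcases y with j | ⟨j, w⟩ <;>
    simp only [inl_mem_pairSet, inr_mem_pairSet] at hx hy <;>
    simp only [base_inl, base_inr, level_inl, level_inr, add_zero]
  · exact exists_dist_eq_of_notMem_cover hT (fun e => hxy (e ▸ rfl)) hx hy
  · exact hF ⟨(hmem i).resolve_right hx, hx⟩ ⟨(hmem j).resolve_left hy, hy⟩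
  · obtain ⟨l, hl⟩ := hF ⟨(hmem j).resolve_right hy, hy⟩ ⟨(hmem i).resolve_left hx, hx⟩
    exact ⟨l, hl.symm⟩
  · rcases eq_or_ne i j with rfl | hij
    · exact ⟨i, rfl⟩
    · obtain ⟨l, hl⟩ := exists_dist_eq_of_notMem_cover hC hij hx hy
      exact ⟨l, by rw [hl]⟩

theorem isDistEqSet_pairSet [Nonempty W] (hG : G.Connected) {C T : Set V}
    (h : IsEqualizingCoverPair G C T) : IsDistEqSet (corona G H) (pairSet C T) := by
  intro x y hx hy hxy
  obtain ⟨l, hl⟩ := exists_dist_add_level_eq h hx hy hxy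
  obtain ⟨z, hz, rfl, hzx⟩ : ∃ z ∈ pairSet C T, base z = l ∧
      ∀ v ∉ pairSet C T, ∀ i, z ∈ copy i → v ∉ copy i := by
    by_cases hlT : l ∈ T
    · exact ⟨Sum.inl l, by simpa using hlT, rfl, by simp⟩
    · have hlC : l ∈ C := (h.2.2.mem_or_mem l).resolve_right hlT
      refine ⟨Sum.inr (l, Classical.arbitrary W), by simpa using hlC, rfl, ?_⟩
      rintro v hv i hzi ⟨u, rfl⟩
      rw [inr_mem_copy_iff] at hzi
      exact hv (by simpa [← hzi] using hlC)
  refine ⟨z, hz, ?_⟩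
  rw [dist_eq_of_forall_mem_copy hG (hzx x hx), dist_eq_of_forall_mem_copy hG (hzx y hy)]
  omega

def copyPart (S : Set (V ⊕ V × W)) : Set V := {i | ∀ u, Sum.inr (i, u) ∈ S}

def basePart (S : Set (V ⊕ V × W)) : Set V := {i | Sum.inl i ∈ S} ∪ (copyPart S)ᶜ

lemma exists_inr_notMem {S : Set (V ⊕ V × W)} {i : V} (hi : i ∉ copyPart S) :
    ∃ u, Sum.inr (i, u) ∉ S := by
  simpa [copyPart] using hi

section LowerBound

variable (hG : G.Connected) {S : Set (V ⊕ V × W)} (hS : IsDistEqSet (corona G H) S)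
include hG

lemma dist_inr_lt_of_mem_copy {z : V ⊕ V × W} {i j : V} (hz : z ∈ copy i) (hij : i ≠ j)
    (u w : W) : (corona G H).dist z (Sum.inr (i, u)) < (corona G H).dist z (Sum.inr (j, w)) := by
  obtain ⟨y, rfl⟩ := hz
  rw [dist_inr_of_notMem_copy hG (show Sum.inr (i, y) ∉ copy j by simpa using hij)]
  have := dist_inr_inr_le_two (G := G) (H := H) i y u
  have := hG.pos_dist_of_ne hij
  simp only [base_inr, level_inr]
  omega

include hS

theorem isVertexCover_copyPart : IsVertexCover (emptyBisector G) (copyPart S) := by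
  intro i j hij
  by_contra! hout
  obtain ⟨u, hu⟩ := exists_inr_notMem hout.1
  obtain ⟨w, hw⟩ := exists_inr_notMem hout.2
  obtain ⟨z, -, hz⟩ := hS hu hw (by simp [hij.1])
  by_cases hzi : z ∈ copy i
  · exact (dist_inr_lt_of_mem_copy hG hzi hij.1 u w).ne hz
  by_cases hzj : z ∈ copy j
  · exact (dist_inr_lt_of_mem_copy hG hzj hij.1.symm w u).ne hz.symm
  rw [dist_inr_of_notMem_copy hG hzi, dist_inr_of_notMem_copy hG hzj] at hz
  exact Set.eq_empty_iff_forall_notMem.1 hij.2 (base z) (by simpa [bisector] using hz)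

theorem isVertexCover_basePart : IsVertexCover (emptyBisector G) (basePart S) := by
  intro i j hij
  by_contra! hout
  obtain ⟨z, -, hz⟩ := hS (fun h => hout.1 (Or.inl h)) (fun h => hout.2 (Or.inl h))
    (by simp [hij.1])
  rw [dist_inl hG, dist_inl hG] at hz
  exact Set.eq_empty_iff_forall_notMem.1 hij.2 (base z) (by simpa [bisector] using hz)

theorem isForwardEqualizedPair_parts :
    IsForwardEqualizedPair G (copyPart S) (basePart S) := by
  refine ⟨Set.eq_univ_of_forall fun i => (em (i ∈ copyPart S)).imp id Or.inr, ?_⟩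
  rintro a ⟨ha, ha'⟩ b ⟨-, hb⟩
  have hab : a ≠ b := by rintro rfl; exact hb ha
  obtain ⟨u, hu⟩ := exists_inr_notMem hb
  obtain ⟨z, -, hz⟩ := hS (fun h => ha' (Or.inl h)) hu (by simp)
  by_cases hzb : z ∈ copy b
  · -- then `d(b, a) + 1 = d(z, inl a) = d(z, inr (b, u)) ≤ 2`, so `b` itself works
    obtain ⟨y, rfl⟩ := hzb
    rw [dist_inl hG] at hz
    have h2 := dist_inr_inr_le_two (G := G) (H := H) b y u
    have h1 := hG.pos_dist_of_ne hab.symm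
    refine ⟨b, ?_⟩
    simp only [base_inr, level_inr] at hz
    rw [SimpleGraph.dist_self]
    omega
  · rw [dist_inl hG, dist_inr_of_notMem_copy hG hzb] at hz
    exact ⟨base z, by omega⟩

theorem exists_inr_mem {i : V} (hi : i ∉ copyPart S) (hiS : Sum.inl i ∉ S) :
    ∃ u, Sum.inr (i, u) ∈ S := by
  obtain ⟨u, hu⟩ := exists_inr_notMem hi
  obtain ⟨z, hzS, hz⟩ := hS hiS hu (by simp)
  by_cases hzi : z ∈ copy i
  · obtain ⟨y, rfl⟩ := hzi
    exact ⟨y, hzS⟩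
  · rw [dist_inl hG, dist_inr_of_notMem_copy hG hzi] at hz
    omega

end LowerBound

lemma eq_inl_of_mem_pairSet_parts {S : Set (V ⊕ V × W)} {x : V ⊕ V × W}
    (hx : x ∈ pairSet (W := W) (copyPart S) (basePart S)) (hxS : x ∉ S) :
    ∃ i ∉ copyPart S, x = Sum.inl i := by
  rcases x with i | ⟨i, u⟩
  · simp only [inl_mem_pairSet, basePart] at hx
    exact ⟨i, hx.resolve_left hxS, rfl⟩
  · exact absurd ((inr_mem_pairSet.1 hx) u) hxS

lemma ncard_pairSet_parts_le [Finite V] [Finite W] [Nonempty W] {S : Set (V ⊕ V × W)}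
    (hS : ∀ i ∉ copyPart S, Sum.inl i ∉ S → ∃ u, Sum.inr (i, u) ∈ S) :
    (pairSet (W := W) (copyPart S) (basePart S)).ncard ≤ S.ncard := by
  classical
  choose! g hg using hS
  -- each `Sum.inl i` of `pairSet` missing from `S` goes to a vertex of its copy of `H` in `S`
  refine Set.ncard_le_ncard_of_injOn
    (fun x => if x ∈ S then x else Sum.inr (base x, g (base x))) ?_ ?_
  · intro x hx
    by_cases hxS : x ∈ S
    · simp [hxS]
    · obtain ⟨i, hi, rfl⟩ := eq_inl_of_mem_pairSet_parts hx hxS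
      simpa [hxS] using hg i hi hxS
  · intro x hx y hy hxy
    by_cases hxS : x ∈ S <;> by_cases hyS : y ∈ S
    · simpa [hxS, hyS] using hxy
    · obtain ⟨j, hj, rfl⟩ := eq_inl_of_mem_pairSet_parts hy hyS
      simp only [hxS, hyS, if_true, if_false, base_inl] at hxy
      exact absurd (inr_mem_pairSet.1 (hxy ▸ hx)) hj
    · obtain ⟨i, hi, rfl⟩ := eq_inl_of_mem_pairSet_parts hx hxS
      simp only [hxS, hyS, if_true, if_false, base_inl] at hxy
      exact absurd (inr_mem_pairSet.1 (hxy ▸ hy)) hi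
    · obtain ⟨i, -, rfl⟩ := eq_inl_of_mem_pairSet_parts hx hxS
      obtain ⟨j, -, rfl⟩ := eq_inl_of_mem_pairSet_parts hy hyS
      simp only [hxS, hyS, if_false, base_inl, Sum.inr.injEq, Prod.mk.injEq] at hxy
      rw [hxy.1]

section EqualizerSets

variable [Finite V] [Fintype W] [Nonempty W] (hG : G.Connected)
include hG

theorem eqdim_le_of_isEqualizingCoverPair {C T : Set V} (h : IsEqualizingCoverPair G C T) :
    eqdim (corona G H) ≤ C.ncard * Fintype.card W + T.ncard :=
  (eqdim_le (isDistEqSet_pairSet hG h)).trans_eq (ncard_pairSet C T)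

theorem exists_isEqualizingCoverPair_le_eqdim :
    ∃ C T, IsEqualizingCoverPair G C T ∧
      C.ncard * Fintype.card W + T.ncard ≤ eqdim (corona G H) := by
  obtain ⟨S, hS, hcard⟩ := exists_isDistEqSet_ncard_eq_eqdim (corona G H)
  refine ⟨copyPart S, basePart S, ⟨isVertexCover_copyPart hG hS, isVertexCover_basePart hG hS,
    isForwardEqualizedPair_parts hG hS⟩, ?_⟩
  rw [← ncard_pairSet, ← hcard]
  exact ncard_pairSet_parts_le fun i hi hiS => exists_inr_mem hG hS hi hiS

end EqualizerSets

end Corona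

/-- For every connected `G` there is `k(G)` with
`α(Ĝ) + β*(G) ≤ k(G) ≤ n(G)` such that `ξ(G ⊙ H) = β(Ĝ)·n(H) + k(G)` whenever
`n(H) > min{α(Ĝ), β(Ĝ) − β*(G) + 1}`, and `ξ(G ⊙ H) ≤ β(Ĝ)·n(H) + k(G)` whenever
`n(H) ≤ min{α(Ĝ), β(Ĝ) − β*(G) + 1}`. -/
theorem eqdim_corona_eventually_linear [Fintype V] (G : SimpleGraph V) (hG : G.Connected) :
    ∃ k : ℕ, indepNum (emptyBisector G) + betaStar G ≤ k ∧ k ≤ Fintype.card V ∧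
      (∀ (W : Type v) (_ : Fintype W) (_ : Nonempty W) (H : SimpleGraph W),
        min (indepNum (emptyBisector G)) (vcNum (emptyBisector G) - betaStar G + 1) <
          Fintype.card W →
        eqdim (corona G H) = vcNum (emptyBisector G) * Fintype.card W + k) ∧
      (∀ (W : Type v) (_ : Fintype W) (_ : Nonempty W) (H : SimpleGraph W),
        Fintype.card W ≤
          min (indepNum (emptyBisector G)) (vcNum (emptyBisector G) - betaStar G + 1) →
        eqdim (corona G H) ≤ vcNum (emptyBisector G) * Fintype.card W + k) := by
  obtain ⟨C₀, T₀, h₀, hC₀, hT₀⟩ := exists_isEqualizingCoverPair_minCoverPartner G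
  have upper (W : Type v) [Fintype W] [Nonempty W] (H : SimpleGraph W) :
      eqdim (corona G H) ≤ vcNum (emptyBisector G) * Fintype.card W + minCoverPartner G :=
    hC₀ ▸ hT₀ ▸ Corona.eqdim_le_of_isEqualizingCoverPair hG h₀
  refine ⟨minCoverPartner G, indepNum_add_betaStar_le_minCoverPartner G,
    minCoverPartner_le_card G, fun W _ _ H hm => (upper W H).antisymm ?_,
    fun W _ _ H _ => upper W H⟩
  obtain ⟨C, T, h, hle⟩ := Corona.exists_isEqualizingCoverPair_le_eqdim (H := H) hG
  exact (vcNum_mul_add_minCoverPartner_le h hm).trans hle
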